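/- arXiv:2207.08151 — 9 statements merged into one kernel-verified Lean document; each statement's English description precedes it below -/
import Mathlib

section
/- For the equal-sharing budget contest game, the function φ(b) = Σ_{j∈M} v_j · H(n_j(b)), where H(p) = Σ_{ℓ=1}^p 1/ℓ is the harmonic sum and n_j(b) is the number of players winning contest j under strategy profile b, is an exact potential function: for any player i, any two strategies b_i, b_i' and any fixed profile b_{-i} of the other players, u_i(b_i', b_{-i}) - u_i(b_i, b_{-i}) = φ(b_i', b_{-i}) - φ(b_i, b_{-i}). -/
open Finset

/-- The harmonic-sum function `φ(b) = Σ_j v_j · H(n_j(b))` is an exact potential for the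
equal-sharing budget contest game. -/
theorem budget_exact_potential
    {I M : Type*} [Fintype I] [DecidableEq I] [Fintype M]
    {k : ℕ}
    (v : M → ℝ) (hv : ∀ j, 0 < v j)
    (f : M → (Fin k → ℝ) → ℝ)
    (hf_mono : ∀ j, Monotone (f j)) (hf0 : ∀ j, f j 0 = 0)
    (hf_nonneg : ∀ j x, 0 ≤ f j x)
    (H : ℕ → ℝ) (hH : ∀ p, H p = ∑ ℓ ∈ Finset.range p, (1 : ℝ) / (ℓ + 1))
    (winners : M → (I → Fin k → ℝ) → Finset I)
    (hwin : ∀ j b i, i ∈ winners j b ↔ 1 ≤ f j (b i))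
    (u : I → (I → Fin k → ℝ) → ℝ)
    (hu : ∀ i b, u i b =
      ∑ j, if i ∈ winners j b then v j / ((winners j b).card : ℝ) else 0)
    (φ : (I → Fin k → ℝ) → ℝ)
    (hφ : ∀ b, φ b = ∑ j, v j * H ((winners j b).card))
    (i : I) (b : I → Fin k → ℝ) (b' : Fin k → ℝ)
    (hb : ∀ i' ℓ, 0 ≤ b i' ℓ) (hb' : ∀ ℓ, 0 ≤ b' ℓ) :
    u i (Function.update b i b') - u i b = φ (Function.update b i b') - φ b := by
  simp only [hu, hφ]
  rw [← Finset.sum_sub_distrib, ← Finset.sum_sub_distrib]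
  refine Finset.sum_congr rfl ?_
  intro j _
  set S := winners j b with hS
  set S' := winners j (Function.update b i b') with hS'
  have hmem : ∀ i', i' ≠ i → (i' ∈ S' ↔ i' ∈ S) := by
    intro i' h
    rw [hS', hS, hwin, hwin, Function.update_of_ne h]
  by_cases h1 : 1 ≤ f j b'
  · by_cases h2 : 1 ≤ f j (b i)
    · have he : S' = S := by
        ext i'
        by_cases h : i' = i
        · subst h
          rw [hS', hS, hwin, hwin, Function.update_self]
          simp [h1, h2]
        · exact hmem i' h
      simp [he]
    · have hiS : i ∉ S := by rw [hS, hwin]; exact h2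
      have hiS' : i ∈ S' := by rw [hS', hwin, Function.update_self]; exact h1
      have he : S' = insert i S := by
        ext i'
        by_cases h : i' = i
        · subst h; simp [hiS']
        · simp [Finset.mem_insert, h, hmem i' h]
      rw [he] at hiS' ⊢
      rw [Finset.card_insert_of_notMem hiS]
      simp only [Finset.mem_insert, true_or, if_true, hiS, if_false]
      rw [hH, hH, Finset.sum_range_succ]
      have hne : (S.card : ℝ) + 1 ≠ 0 := by positivity
      push_cast
      field_simp
      ring
  · by_cases h2 : 1 ≤ f j (b i)
    · have hiS : i ∈ S := by rw [hS, hwin]; exact h2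
      have hiS' : i ∉ S' := by rw [hS', hwin, Function.update_self]; exact h1
      have he : S = insert i S' := by
        ext i'
        by_cases h : i' = i
        · subst h; simp [hiS]
        · simp [Finset.mem_insert, h, hmem i' h]
      rw [he] at hiS ⊢
      rw [Finset.card_insert_of_notMem hiS']
      simp only [Finset.mem_insert, true_or, if_true, hiS', if_false]
      rw [hH, hH, Finset.sum_range_succ]
      have hne : (S'.card : ℝ) + 1 ≠ 0 := by positivity
      push_cast
      field_simp
      ring
    · have he : S' = S := by
        ext i'
        by_cases h : i' = i
        · subst h
          rw [hS', hS, hwin, hwin, Function.update_self]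
          simp [h1, h2]
        · exact hmem i' h
      simp [he]
end

section
/- For the equal-sharing cost contest game, the function φ(b) = Σ_{j∈M} v_j · H(n_j(b)) − Σ_{i∈N} c_i(b_i), where H is the harmonic sum, is an exact potential function: for any player i, any two strategies b_i, b_i' and any fixed profile b_{-i}, u_i(b_i', b_{-i}) − u_i(b_i, b_{-i}) = φ(b_i', b_{-i}) − φ(b_i, b_{-i}). -/
open Finset

/-- `φ(b) = Σ_j v_j · H(n_j(b)) − Σ_i c_i(b_i)` is an exact potential for the
equal-sharing cost contest game. -/
theorem cost_exact_potential
    {I M : Type*} [Fintype I] [DecidableEq I] [Fintype M]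
    {k : ℕ}
    (v : M → ℝ) (hv : ∀ j, 0 < v j)
    (f : M → (Fin k → ℝ) → ℝ)
    (hf_mono : ∀ j, Monotone (f j)) (hf0 : ∀ j, f j 0 = 0)
    (hf_nonneg : ∀ j x, 0 ≤ f j x)
    (c : I → (Fin k → ℝ) → ℝ)
    (hc_mono : ∀ i, Monotone (c i)) (hc0 : ∀ i, c i 0 = 0)
    (hc_nonneg : ∀ i x, 0 ≤ c i x)
    (H : ℕ → ℝ) (hH : ∀ p, H p = ∑ ℓ ∈ Finset.range p, (1 : ℝ) / (ℓ + 1))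
    (winners : M → (I → Fin k → ℝ) → Finset I)
    (hwin : ∀ j b i, i ∈ winners j b ↔ 1 ≤ f j (b i))
    (u : I → (I → Fin k → ℝ) → ℝ)
    (hu : ∀ i b, u i b =
      (∑ j, if i ∈ winners j b then v j / ((winners j b).card : ℝ) else 0) - c i (b i))
    (φ : (I → Fin k → ℝ) → ℝ)
    (hφ : ∀ b, φ b = (∑ j, v j * H ((winners j b).card)) - ∑ i', c i' (b i'))
    (i : I) (b : I → Fin k → ℝ) (b' : Fin k → ℝ)
    (hb : ∀ i' ℓ, 0 ≤ b i' ℓ) (hb' : ∀ ℓ, 0 ≤ b' ℓ) :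
    u i (Function.update b i b') - u i b = φ (Function.update b i b') - φ b := by
  classical
  set b2 := Function.update b i b' with hb2
  have herase : ∀ j, (winners j b2).erase i = (winners j b).erase i := by
    intro j; ext x
    simp only [Finset.mem_erase, hwin]
    constructor <;> rintro ⟨hx, h⟩ <;> refine ⟨hx, ?_⟩ <;>
      simpa [hb2, Function.update_of_ne hx] using h
  have hH' : ∀ n : ℕ, H (n + 1) = H n + 1 / (n + 1) := by
    intro n; rw [hH, hH, Finset.sum_range_succ]
  have key : ∀ j, v j * H ((winners j b2).card) - v j * H ((winners j b).card)
      = (if i ∈ winners j b2 then v j / ((winners j b2).card : ℝ) else 0)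
        - (if i ∈ winners j b then v j / ((winners j b).card : ℝ) else 0) := by
    intro j
    by_cases h1 : i ∈ winners j b2 <;> by_cases h2 : i ∈ winners j b
    · have hcard : (winners j b2).card = (winners j b).card := by
        rw [← Finset.card_erase_add_one h1, ← Finset.card_erase_add_one h2, herase j]
      simp [hcard, h1, h2]
    · have hcard : (winners j b2).card = (winners j b).card + 1 := by
        rw [← Finset.card_erase_add_one h1, herase j, Finset.erase_eq_of_notMem h2]
      simp only [h1, h2, if_true, if_false, hcard, hH', Nat.cast_add, Nat.cast_one]
      ring
    · have hcard : (winners j b).card = (winners j b2).card + 1 := by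
        rw [← Finset.card_erase_add_one h2, ← herase j, Finset.erase_eq_of_notMem h1]
      simp only [h1, h2, if_true, if_false, hcard, hH', Nat.cast_add, Nat.cast_one]
      ring
    · have hcard : (winners j b2).card = (winners j b).card := by
        rw [← Finset.erase_eq_of_notMem h1, herase j, Finset.erase_eq_of_notMem h2]
      simp [hcard, h1, h2]
  have hsum : (∑ j, v j * H ((winners j b2).card)) - (∑ j, v j * H ((winners j b).card))
      = (∑ j, if i ∈ winners j b2 then v j / ((winners j b2).card : ℝ) else 0)
        - (∑ j, if i ∈ winners j b then v j / ((winners j b).card : ℝ) else 0) := by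
    rw [← Finset.sum_sub_distrib, ← Finset.sum_sub_distrib]
    exact Finset.sum_congr rfl fun j _ => key j
  have hfun : (fun i' => c i' (b2 i')) = Function.update (fun i' => c i' (b i')) i (c i b') := by
    funext x
    by_cases hx : x = i
    · subst hx; simp [hb2]
    · simp [hb2, Function.update_of_ne hx]
  have hcost : (∑ i', c i' (b2 i')) - ∑ i', c i' (b i') = c i b' - c i (b i) := by
    have h1 : ∑ i', c i' (b2 i')
        = c i b' + ∑ i' ∈ Finset.univ.erase i, c i' (b i') := by
      rw [show (∑ i', c i' (b2 i')) = ∑ i', (fun i' => c i' (b2 i')) i' from rfl, hfun,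
        Finset.sum_update_of_mem (Finset.mem_univ i)]
      simp [Finset.sdiff_singleton_eq_erase]
    have h2 : ∑ i', c i' (b i')
        = c i (b i) + ∑ i' ∈ Finset.univ.erase i, c i' (b i') := by
      exact (Finset.add_sum_erase _ _ (Finset.mem_univ i)).symm
    rw [h1, h2]; ring
  rw [hu, hu, hφ, hφ]
  have hbi : b2 i = b' := by simp [hb2]
  rw [hbi]
  linarith [hsum, hcost]
end

section
/- Every finite equal-sharing budget contest game (where each player's feasible strategy set is finite) has a pure-strategy Nash equilibrium, namely any strategy profile maximizing the potential φ(b) = Σ_{j∈M} v_j · H(n_j(b)). -/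
open Finset

private lemma budget_aux {I : Type*} [DecidableEq I] (v : ℝ) (H : ℕ → ℝ)
    (hH : ∀ p, H p = ∑ ℓ ∈ Finset.range p, (1 : ℝ) / (ℓ + 1))
    (i : I) (S S' : Finset I) (h : ∀ i', i' ≠ i → (i' ∈ S ↔ i' ∈ S')) :
    (if i ∈ S' then v / (S'.card : ℝ) else 0) - (if i ∈ S then v / (S.card : ℝ) else 0)
      = v * H S'.card - v * H S.card := by
  have hstep : ∀ n : ℕ, H (n + 1) = H n + 1 / ((n : ℝ) + 1) := by
    intro n
    rw [hH, hH, Finset.sum_range_succ]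
  by_cases hi : i ∈ S <;> by_cases hi' : i ∈ S'
  · have : S = S' := by
      ext a
      by_cases ha : a = i
      · subst ha; simp [hi, hi']
      · exact h a ha
    simp [this]
  · have hins : S = insert i S' := by
      ext a
      by_cases ha : a = i
      · subst ha; simp [hi]
      · simp [Finset.mem_insert, ha, h a ha]
    have hcard : S.card = S'.card + 1 := by
      rw [hins, Finset.card_insert_of_notMem hi']
    rw [hcard]
    simp only [hi, hi', if_true, if_false, hstep S'.card]
    push_cast
    have : (S'.card : ℝ) + 1 ≠ 0 := by positivity
    field_simp
    ring
  · have hins : S' = insert i S := by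
      ext a
      by_cases ha : a = i
      · subst ha; simp [hi']
      · simp [Finset.mem_insert, ha, h a ha]
    have hcard : S'.card = S.card + 1 := by
      rw [hins, Finset.card_insert_of_notMem hi]
    rw [hcard]
    simp only [hi, hi', if_true, if_false, hstep S.card]
    push_cast
    have : (S.card : ℝ) + 1 ≠ 0 := by positivity
    field_simp
    ring
  · have : S = S' := by
      ext a
      by_cases ha : a = i
      · subst ha; simp [hi, hi']
      · exact h a ha
    simp [this, hi, hi']

/-- Every finite equal-sharing budget contest game has a pure-strategy Nash equilibrium;
moreover any profile maximizing the potential `φ(b) = Σ_j v_j · H(n_j(b))` is one. -/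
theorem budget_pne_exists
    {I M : Type*} [Fintype I] [DecidableEq I] [Fintype M] [Nonempty I]
    {k : ℕ}
    (v : M → ℝ) (hv : ∀ j, 0 < v j)
    (f : M → (Fin k → ℝ) → ℝ)
    (hf_mono : ∀ j, Monotone (f j)) (hf0 : ∀ j, f j 0 = 0)
    (B : I → Finset (Fin k → ℝ)) (hB : ∀ i, (B i).Nonempty)
    (H : ℕ → ℝ) (hH : ∀ p, H p = ∑ ℓ ∈ Finset.range p, (1 : ℝ) / (ℓ + 1))
    (winners : M → (I → Fin k → ℝ) → Finset I)
    (hwin : ∀ j b i, i ∈ winners j b ↔ 1 ≤ f j (b i))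
    (u : I → (I → Fin k → ℝ) → ℝ)
    (hu : ∀ i b, u i b =
      ∑ j, if i ∈ winners j b then v j / ((winners j b).card : ℝ) else 0)
    (φ : (I → Fin k → ℝ) → ℝ)
    (hφ : ∀ b, φ b = ∑ j, v j * H ((winners j b).card)) :
    (∃ b : I → Fin k → ℝ, (∀ i, b i ∈ B i) ∧
      ∀ i, ∀ bi' ∈ B i, u i (Function.update b i bi') ≤ u i b) ∧
    (∀ b : I → Fin k → ℝ, (∀ i, b i ∈ B i) →
      (∀ b' : I → Fin k → ℝ, (∀ i, b' i ∈ B i) → φ b' ≤ φ b) →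
      ∀ i, ∀ bi' ∈ B i, u i (Function.update b i bi') ≤ u i b) := by
  -- exact potential property
  have hpot : ∀ (b : I → Fin k → ℝ) (i : I) (bi' : Fin k → ℝ),
      u i (Function.update b i bi') - u i b = φ (Function.update b i bi') - φ b := by
    intro b i bi'
    set b' := Function.update b i bi' with hb'
    rw [hu, hu, hφ, hφ, ← Finset.sum_sub_distrib, ← Finset.sum_sub_distrib]
    refine Finset.sum_congr rfl fun j _ => ?_
    refine budget_aux (v j) H hH i (winners j b) (winners j b') fun i' hi' => ?_
    rw [hwin, hwin, hb', Function.update_of_ne hi']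
  have hmax : ∀ b : I → Fin k → ℝ, (∀ i, b i ∈ B i) →
      (∀ b' : I → Fin k → ℝ, (∀ i, b' i ∈ B i) → φ b' ≤ φ b) →
      ∀ i, ∀ bi' ∈ B i, u i (Function.update b i bi') ≤ u i b := by
    intro b hbB hmax i bi' hbi'
    have hfeas : ∀ i', Function.update b i bi' i' ∈ B i' := by
      intro i'
      rcases eq_or_ne i' i with rfl | h
      · simpa using hbi'
      · rw [Function.update_of_ne h]; exact hbB i'
    have := hpot b i bi'
    have hφle := hmax _ hfeas
    linarith
  refine ⟨?_, hmax⟩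
  obtain ⟨b, hbmem, hbmax⟩ := Finset.exists_max_image (Fintype.piFinset B) φ
    (Fintype.piFinset_nonempty.2 hB)
  have hbB : ∀ i, b i ∈ B i := Fintype.mem_piFinset.1 hbmem
  exact ⟨b, hbB, hmax b hbB fun b' hb' => hbmax b' (Fintype.mem_piFinset.2 hb')⟩
end

section
/- Every finite equal-sharing cost contest game has a pure-strategy Nash equilibrium, namely any strategy profile maximizing the potential φ(b) = Σ_{j∈M} v_j · H(n_j(b)) − Σ_{i∈N} c_i(b_i). -/
open Finset

/-- Every finite equal-sharing cost contest game has a pure-strategy Nash equilibrium;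
moreover any profile maximizing `φ(b) = Σ_j v_j · H(n_j(b)) − Σ_i c_i(b_i)` is one. -/
theorem cost_pne_exists
    {I M : Type*} [Fintype I] [DecidableEq I] [Fintype M] [Nonempty I]
    {k : ℕ}
    (v : M → ℝ) (hv : ∀ j, 0 < v j)
    (f : M → (Fin k → ℝ) → ℝ)
    (hf_mono : ∀ j, Monotone (f j)) (hf0 : ∀ j, f j 0 = 0)
    (c : I → (Fin k → ℝ) → ℝ) (hc_nonneg : ∀ i x, 0 ≤ c i x)
    (B : I → Finset (Fin k → ℝ)) (hB : ∀ i, (B i).Nonempty)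
    (H : ℕ → ℝ) (hH : ∀ p, H p = ∑ ℓ ∈ Finset.range p, (1 : ℝ) / (ℓ + 1))
    (winners : M → (I → Fin k → ℝ) → Finset I)
    (hwin : ∀ j b i, i ∈ winners j b ↔ 1 ≤ f j (b i))
    (u : I → (I → Fin k → ℝ) → ℝ)
    (hu : ∀ i b, u i b =
      (∑ j, if i ∈ winners j b then v j / ((winners j b).card : ℝ) else 0) - c i (b i))
    (φ : (I → Fin k → ℝ) → ℝ)
    (hφ : ∀ b, φ b = (∑ j, v j * H ((winners j b).card)) - ∑ i', c i' (b i')) :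
    (∃ b : I → Fin k → ℝ, (∀ i, b i ∈ B i) ∧
      ∀ i, ∀ bi' ∈ B i, u i (Function.update b i bi') ≤ u i b) ∧
    (∀ b : I → Fin k → ℝ, (∀ i, b i ∈ B i) →
      (∀ b' : I → Fin k → ℝ, (∀ i, b' i ∈ B i) → φ b' ≤ φ b) →
      ∀ i, ∀ bi' ∈ B i, u i (Function.update b i bi') ≤ u i b) := by
  -- H(n+1) - H(n) = 1/(n+1)
  have hHstep : ∀ n : ℕ, H (n + 1) - H n = 1 / ((n : ℝ) + 1) := by
    intro n
    rw [hH, hH, Finset.sum_range_succ]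
    ring
  -- exact potential property
  have key : ∀ (b : I → Fin k → ℝ) (i : I) (bi' : Fin k → ℝ),
      u i (Function.update b i bi') - u i b = φ (Function.update b i bi') - φ b := by
    intro b i bi'
    set b' := Function.update b i bi' with hb'
    have hbi : b' i = bi' := Function.update_self i bi' b
    have hoth : ∀ i', i' ≠ i → b' i' = b i' := fun i' h =>
      Function.update_of_ne h bi' b
    have herase : ∀ j, (winners j b').erase i = (winners j b).erase i := by
      intro j
      ext i'
      simp only [mem_erase, hwin]
      constructor
      · rintro ⟨hne, h⟩
        exact ⟨hne, by rwa [hoth i' hne] at h⟩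
      · rintro ⟨hne, h⟩
        exact ⟨hne, by rwa [hoth i' hne]⟩
    have hj : ∀ j : M,
        ((if i ∈ winners j b' then v j / ((winners j b').card : ℝ) else 0)
          - if i ∈ winners j b then v j / ((winners j b).card : ℝ) else 0)
        = v j * H ((winners j b').card) - v j * H ((winners j b).card) := by
      intro j
      by_cases h1 : i ∈ winners j b' <;> by_cases h2 : i ∈ winners j b
      · -- in both: cards equal
        have hc1 : ((winners j b').erase i).card + 1 = (winners j b').card :=
          Finset.card_erase_add_one h1
        have hc2 : ((winners j b).erase i).card + 1 = (winners j b).card :=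
          Finset.card_erase_add_one h2
        have : (winners j b').card = (winners j b).card := by
          rw [← hc1, ← hc2, herase j]
        simp [h1, h2, this]
      · -- wins after deviation only
        have hS : winners j b = (winners j b').erase i := by
          rw [herase j]
          exact (Finset.erase_eq_of_notMem h2).symm
        have hc1 : ((winners j b').erase i).card + 1 = (winners j b').card :=
          Finset.card_erase_add_one h1
        set n := (winners j b).card with hn
        have hcard : (winners j b').card = n + 1 := by rw [← hc1, ← hS]
        have hstep := hHstep n
        simp only [h1, h2, if_true, if_false, hcard]
        push_cast
        rw [show v j * H (n+1) - v j * H n = v j * (H (n+1) - H n) by ring, hstep]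
        ring
      · -- wins before deviation only
        have hS : winners j b' = (winners j b).erase i := by
          rw [← herase j]
          exact (Finset.erase_eq_of_notMem h1).symm
        have hc2 : ((winners j b).erase i).card + 1 = (winners j b).card :=
          Finset.card_erase_add_one h2
        set n := (winners j b').card with hn
        have hcard : (winners j b).card = n + 1 := by rw [← hc2, ← hS]
        have hstep := hHstep n
        simp only [h1, h2, if_true, if_false, hcard]
        push_cast
        rw [show v j * H n - v j * H (n+1) = -(v j * (H (n+1) - H n)) by ring, hstep]
        ring
      · -- in neither: sets equal
        have hS : winners j b' = winners j b := by
          rw [← Finset.erase_eq_of_notMem h1, ← Finset.erase_eq_of_notMem h2,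
            herase j]
        simp [h1, h2, hS]
    have hsum : (∑ j, if i ∈ winners j b' then v j / ((winners j b').card : ℝ) else 0)
        - (∑ j, if i ∈ winners j b then v j / ((winners j b).card : ℝ) else 0)
        = (∑ j, v j * H ((winners j b').card)) - ∑ j, v j * H ((winners j b).card) := by
      rw [← Finset.sum_sub_distrib, ← Finset.sum_sub_distrib]
      exact Finset.sum_congr rfl fun j _ => hj j
    have hcs : (∑ i', c i' (b' i')) - (∑ i', c i' (b i')) = c i bi' - c i (b i) := by
      rw [← Finset.sum_sub_distrib]
      rw [Finset.sum_eq_single i]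
      · rw [hbi]
      · intro i' _ hne
        rw [hoth i' hne]; ring
      · intro h; exact absurd (Finset.mem_univ i) h
    rw [hu, hu, hφ, hφ]
    rw [hbi]
    linarith [hsum, hcs]
  -- second part first
  have part2 : ∀ b : I → Fin k → ℝ, (∀ i, b i ∈ B i) →
      (∀ b' : I → Fin k → ℝ, (∀ i, b' i ∈ B i) → φ b' ≤ φ b) →
      ∀ i, ∀ bi' ∈ B i, u i (Function.update b i bi') ≤ u i b := by
    intro b hbmem hbmax i bi' hbi'
    have hmem : ∀ i', Function.update b i bi' i' ∈ B i' := by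
      intro i'
      by_cases h : i' = i
      · subst h; rw [Function.update_self]; exact hbi'
      · rw [Function.update_of_ne h]; exact hbmem i'
    have := hbmax _ hmem
    have hk := key b i bi'
    linarith
  refine ⟨?_, part2⟩
  -- existence of a φ-maximizer on the product set
  have hne : (Fintype.piFinset B).Nonempty := by
    refine ⟨fun i => (hB i).choose, ?_⟩
    rw [Fintype.mem_piFinset]
    exact fun i => (hB i).choose_spec
  obtain ⟨b, hbmem, hbmax⟩ := Finset.exists_max_image (Fintype.piFinset B) φ hne
  rw [Fintype.mem_piFinset] at hbmem
  refine ⟨b, hbmem, part2 b hbmem ?_⟩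
  intro b' hb'
  exact hbmax b' (by rw [Fintype.mem_piFinset]; exact hb')
end

section
/- In the equal-sharing budget contest game, for any two strategy profiles b and b' and any contest j, the sum over players i ∈ N_j(b') \ N_j(b) of the prize share x_{i,j}(b_i', b_{-i}) that player i would receive from contest j in the hybrid profile (b_i', b_{-i}) is at least 1{n_j(b') > 0} − 1{n_j(b) > 0}. -/
open Finset

/-- Per-contest smoothness inequality for the equal-sharing budget contest game:
for profiles `b, b'` and any contest `j`,
`Σ_{i ∈ N_j(b') \ N_j(b)} x_{i,j}(b_i', b_{-i}) ≥ 1{n_j(b') > 0} − 1{n_j(b) > 0}`. -/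
theorem budget_per_contest_smooth
    {I M : Type*} [Fintype I] [DecidableEq I] [Fintype M]
    {k : ℕ}
    (f : M → (Fin k → ℝ) → ℝ)
    (hf_mono : ∀ j, Monotone (f j)) (hf0 : ∀ j, f j 0 = 0)
    (winners : M → (I → Fin k → ℝ) → Finset I)
    (hwin : ∀ j b i, i ∈ winners j b ↔ 1 ≤ f j (b i))
    (x : I → M → (I → Fin k → ℝ) → ℝ)
    (hx : ∀ i j b, x i j b =
      if i ∈ winners j b then 1 / ((winners j b).card : ℝ) else 0)
    (b b' : I → Fin k → ℝ) (j : M) :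
    ((if 0 < (winners j b').card then (1 : ℝ) else 0)
      - (if 0 < (winners j b).card then (1 : ℝ) else 0))
    ≤ ∑ i ∈ winners j b' \ winners j b, x i j (Function.update b i (b' i)) := by
  -- winners of the hybrid profile
  have hupd : ∀ i ∈ winners j b' \ winners j b,
      winners j (Function.update b i (b' i)) = insert i (winners j b) := by
    intro i hi
    rw [mem_sdiff] at hi
    ext l
    rw [hwin, mem_insert, hwin]
    by_cases hl : l = i
    · subst hl
      simp [Function.update_self, (hwin j b' l).mp hi.1]
    · simp [Function.update_of_ne hl, hl]
  have hterm : ∀ i ∈ winners j b' \ winners j b,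
      x i j (Function.update b i (b' i)) = 1 / ((winners j b).card + 1 : ℝ) := by
    intro i hi
    have hni : i ∉ winners j b := (mem_sdiff.mp hi).2
    rw [hx, hupd i hi, if_pos (mem_insert_self i _), card_insert_of_notMem hni]
    push_cast
    ring_nf
  rw [Finset.sum_congr rfl hterm, Finset.sum_const, nsmul_eq_mul]
  by_cases hb : 0 < (winners j b).card
  · rw [if_pos hb]
    have h1 : (if 0 < (winners j b').card then (1:ℝ) else 0) ≤ 1 := by
      split <;> norm_num
    have h2 : (0:ℝ) ≤ ((winners j b' \ winners j b).card : ℝ) *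
        (1 / ((winners j b).card + 1 : ℝ)) := by positivity
    linarith
  · rw [if_neg hb]
    have hbe : winners j b = ∅ := card_eq_zero.mp (Nat.eq_zero_of_not_pos hb)
    rw [hbe, sdiff_empty, card_empty, Nat.cast_zero]
    norm_num
    split
    · rename_i h
      have : (1:ℝ) ≤ ((winners j b').card : ℝ) := by exact_mod_cast card_pos.mpr h
      linarith
    · positivity
end

section
/- The equal-sharing budget contest game is (1,1)-smooth: for any two strategy profiles b and b', Σ_{i∈N} u_i(b_i', b_{-i}) ≥ SW(b') − SW(b), where SW(b) = Σ_{i∈N} u_i(b) = Σ_{j∈M} v_j · 1{n_j(b) > 0}. -/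
open Finset

/-- The equal-sharing budget contest game is (1,1)-smooth:
`Σ_i u_i(b_i', b_{-i}) ≥ SW(b') − SW(b)` for all profiles `b, b'`. -/
theorem budget_one_one_smooth
    {I M : Type*} [Fintype I] [DecidableEq I] [Fintype M]
    {k : ℕ}
    (v : M → ℝ) (hv : ∀ j, 0 < v j)
    (f : M → (Fin k → ℝ) → ℝ)
    (hf_mono : ∀ j, Monotone (f j)) (hf0 : ∀ j, f j 0 = 0)
    (winners : M → (I → Fin k → ℝ) → Finset I)
    (hwin : ∀ j b i, i ∈ winners j b ↔ 1 ≤ f j (b i))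
    (u : I → (I → Fin k → ℝ) → ℝ)
    (hu : ∀ i b, u i b =
      ∑ j, if i ∈ winners j b then v j / ((winners j b).card : ℝ) else 0)
    (SW : (I → Fin k → ℝ) → ℝ)
    (hSW : ∀ b, SW b = ∑ j, v j * (if 0 < (winners j b).card then (1 : ℝ) else 0))
    (b b' : I → Fin k → ℝ) :
    SW b' - SW b ≤ ∑ i, u i (Function.update b i (b' i)) := by
  classical
  have hterm : ∀ (c : I → Fin k → ℝ) (i : I) (j : M),
      (0:ℝ) ≤ (if i ∈ winners j c then v j / ((winners j c).card : ℝ) else 0) := by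
    intro c i j
    split
    · exact div_nonneg (hv j).le (Nat.cast_nonneg _)
    · exact le_refl 0
  calc SW b' - SW b
      = ∑ j, (v j * (if 0 < (winners j b').card then (1:ℝ) else 0)
            - v j * (if 0 < (winners j b).card then (1:ℝ) else 0)) := by
        rw [hSW, hSW, Finset.sum_sub_distrib]
    _ ≤ ∑ j, ∑ i, (if i ∈ winners j (Function.update b i (b' i)) then
            v j / ((winners j (Function.update b i (b' i))).card : ℝ) else 0) := by
        apply Finset.sum_le_sum
        intro j _
        by_cases hb : 0 < (winners j b).card
        · have h1 : (if 0 < (winners j b').card then (1:ℝ) else 0) ≤ 1 := by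
            split <;> norm_num
          simp only [hb, if_true, mul_one]
          refine le_trans ?_ (Finset.sum_nonneg fun i _ => hterm _ i j)
          nlinarith [(hv j).le]
        · have hbe : winners j b = ∅ := Finset.card_eq_zero.mp (by omega)
          by_cases hb' : 0 < (winners j b').card
          · obtain ⟨i, hi⟩ := Finset.card_pos.mp hb'
            have hwi : winners j (Function.update b i (b' i)) = {i} := by
              ext x
              rw [hwin, Finset.mem_singleton]
              constructor
              · intro hx
                by_contra hne
                have hx' : x ∈ winners j b := (hwin j b x).mpr (by
                  rwa [Function.update_of_ne hne] at hx)
                simp [hbe] at hx'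
              · intro hx
                rw [hx, Function.update_self]
                exact (hwin j b' i).mp hi
            simp only [hb, hb', if_true, if_false, mul_one, mul_zero, sub_zero]
            have hle := Finset.single_le_sum
              (f := fun i' => if i' ∈ winners j (Function.update b i' (b' i')) then
                v j / ((winners j (Function.update b i' (b' i'))).card : ℝ) else 0)
              (fun i' _ => hterm _ i' j) (Finset.mem_univ i)
            refine le_trans ?_ hle
            simp [hwi]
          · simp only [hb, hb', if_false, mul_zero, sub_zero]
            exact Finset.sum_nonneg fun i _ => hterm _ i j
    _ = ∑ i, u i (Function.update b i (b' i)) := by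
        rw [Finset.sum_comm]
        exact Finset.sum_congr rfl fun i _ => (hu i _).symm
end

section
/- In any pure-strategy Nash equilibrium b of the equal-sharing budget contest game, the social welfare satisfies SW(b) ≥ (1/2) · SW(b') for every strategy profile b'; in particular the price of anarchy over pure Nash equilibria is at most 2. -/
open Finset

/-- Pure price of anarchy of the equal-sharing budget contest game is at most 2:
in any pure Nash equilibrium `b`, `SW(b') ≤ 2 · SW(b)` for every feasible profile `b'`. -/
theorem budget_pure_poa_le_two
    {I M : Type*} [Fintype I] [DecidableEq I] [Fintype M]
    {k : ℕ}
    (v : M → ℝ) (hv : ∀ j, 0 < v j)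
    (f : M → (Fin k → ℝ) → ℝ)
    (hf_mono : ∀ j, Monotone (f j)) (hf0 : ∀ j, f j 0 = 0)
    (B : I → Set (Fin k → ℝ))
    (winners : M → (I → Fin k → ℝ) → Finset I)
    (hwin : ∀ j b i, i ∈ winners j b ↔ 1 ≤ f j (b i))
    (u : I → (I → Fin k → ℝ) → ℝ)
    (hu : ∀ i b, u i b =
      ∑ j, if i ∈ winners j b then v j / ((winners j b).card : ℝ) else 0)
    (SW : (I → Fin k → ℝ) → ℝ)
    (hSW : ∀ b, SW b = ∑ j, v j * (if 0 < (winners j b).card then (1 : ℝ) else 0))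
    (b : I → Fin k → ℝ) (hbB : ∀ i, b i ∈ B i)
    (hNE : ∀ i, ∀ bi' ∈ B i, u i (Function.update b i bi') ≤ u i b) :
    ∀ b' : I → Fin k → ℝ, (∀ i, b' i ∈ B i) → SW b' ≤ 2 * SW b := by
  intro b' hb'
  classical
  -- total utility equals social welfare
  have key : ∑ i, u i b = SW b := by
    rw [hSW]
    simp_rw [hu]
    rw [Finset.sum_comm]
    refine Finset.sum_congr rfl fun j _ => ?_
    rw [Finset.sum_ite_mem, Finset.univ_inter, Finset.sum_const, nsmul_eq_mul]
    rcases Nat.eq_zero_or_pos (winners j b).card with h | h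
    · simp [h]
    · rw [if_pos h]
      have hne : ((winners j b).card : ℝ) ≠ 0 := Nat.cast_ne_zero.mpr h.ne'
      field_simp
  have hSWb_nonneg : 0 ≤ SW b := by
    rw [hSW]
    refine Finset.sum_nonneg fun j _ => ?_
    have := (hv j).le
    positivity
  -- the set of contests won in b' but not in b
  set T : Finset M := Finset.univ.filter
      (fun j => 0 < (winners j b').card ∧ (winners j b).card = 0) with hT
  have hTle : ∑ j ∈ T, v j ≤ SW b := by
    rcases T.eq_empty_or_nonempty with hTe | ⟨j0, hj0⟩
    · rw [hTe]; simpa using hSWb_nonneg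
    · have hj0' := (Finset.mem_filter.mp hj0).2.1
      obtain ⟨i0, hi0⟩ := Finset.card_pos.mp hj0'
      -- witness function
      have hInh : Nonempty I := ⟨i0⟩
      let w : M → I := fun j =>
        if h : (winners j b').Nonempty then h.choose else Classical.arbitrary I
      have hw : ∀ j ∈ T, w j ∈ winners j b' := by
        intro j hj
        have h := Finset.card_pos.mp (Finset.mem_filter.mp hj).2.1
        simp only [w, dif_pos h]
        exact h.choose_spec
      rw [← key, ← Finset.sum_fiberwise T w v]
      refine Finset.sum_le_sum fun i _ => ?_
      -- the deviation of i to b' i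
      have hdev := hNE i (b' i) (hb' i)
      set c := Function.update b i (b' i) with hc
      refine le_trans ?_ hdev
      rw [hu i c]
      have hsub : T.filter (fun j => w j = i) ⊆ Finset.univ := Finset.subset_univ _
      calc ∑ j ∈ T.filter (fun j => w j = i), v j
          = ∑ j ∈ T.filter (fun j => w j = i),
              (if i ∈ winners j c then v j / ((winners j c).card : ℝ) else 0) := by
            refine Finset.sum_congr rfl fun j hj => ?_
            obtain ⟨hjT, hwi⟩ := Finset.mem_filter.mp hj
            have hzero := (Finset.mem_filter.mp hjT).2.2
            have hwin' : winners j c = {i} := by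
              ext l
              rw [hwin, Finset.mem_singleton]
              constructor
              · intro hl
                by_contra hne
                have : c l = b l := Function.update_of_ne hne _ _
                rw [this] at hl
                have : l ∈ winners j b := (hwin j b l).mpr hl
                have := Finset.card_pos.mpr ⟨l, this⟩
                omega
              · intro hl
                subst hl
                have : c l = b' l := Function.update_self _ _ _
                rw [this]
                exact (hwin j b' l).mp (hwi ▸ hw j hjT)
            rw [hwin']
            simp
          _ ≤ ∑ j, (if i ∈ winners j c then v j / ((winners j c).card : ℝ) else 0) := by
            refine Finset.sum_le_sum_of_subset_of_nonneg hsub fun j _ _ => ?_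
            split
            · exact div_nonneg (hv j).le (Nat.cast_nonneg _)
            · exact le_refl 0
  -- conclude
  have hmain : SW b' ≤ SW b + ∑ j ∈ T, v j := by
    rw [hSW b', hSW b, hT, Finset.sum_filter, ← Finset.sum_add_distrib]
    refine Finset.sum_le_sum fun j _ => ?_
    by_cases h1 : 0 < (winners j b').card
    · rw [if_pos h1, mul_one]
      by_cases h2 : 0 < (winners j b).card
      · rw [if_pos h2, mul_one]
        have : (0:ℝ) ≤ if 0 < (winners j b').card ∧ (winners j b).card = 0 then v j else 0 := by
          split
          · exact (hv j).le
          · exact le_refl 0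
        linarith
      · rw [if_neg h2, mul_zero, if_pos ⟨h1, by omega⟩]
        simp
    · rw [if_neg h1, mul_zero]
      have h3 : (0:ℝ) ≤ v j * (if 0 < (winners j b).card then (1:ℝ) else 0) := by
        split
        · simpa using (hv j).le
        · simp
      have h4 : (0:ℝ) ≤ if 0 < (winners j b').card ∧ (winners j b).card = 0 then v j else 0 := by
        split
        · exact (hv j).le
        · exact le_refl 0
      linarith
  linarith
end

section
/- The price of anarchy of the equal-sharing cost contest game is unbounded: for every ε ∈ (0, 1/4) there exists an instance with 2 players, 2 activities, and 2 contests, together with a pure-strategy Nash equilibrium b, such that SW(b) = 2ε while the optimal social welfare is 1 − 2ε; hence the ratio (optimal welfare)/(equilibrium welfare) = (1−2ε)/(2ε) tends to infinity as ε → 0. -/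
open Finset

noncomputable section PoACost

/-- the other activity / player index in `Fin 2` -/
def other (i : Fin 2) : Fin 2 := if i = 0 then 1 else 0

/-- winners of contest `j`: players producing output at least 1 along activity `j` -/
def winners2 (b : Fin 2 → Fin 2 → ℝ) (j : Fin 2) : Finset (Fin 2) :=
  univ.filter (fun i => 1 ≤ b i j)

/-- cost of player `i`: marginal cost `1/2 + ε` along activity `i`, `1 − ε` along the other -/
def cost2 (ε : ℝ) (i : Fin 2) (x : Fin 2 → ℝ) : ℝ :=
  (1 / 2 + ε) * x i + (1 - ε) * x (other i)

/-- utility of player `i`: equal shares of unit prizes won minus cost -/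
def util2 (ε : ℝ) (b : Fin 2 → Fin 2 → ℝ) (i : Fin 2) : ℝ :=
  (∑ j : Fin 2, if i ∈ winners2 b j then 1 / ((winners2 b j).card : ℝ) else 0)
    - cost2 ε i (b i)

/-- social welfare: total prize allocated minus total cost -/
def sw2 (ε : ℝ) (b : Fin 2 → Fin 2 → ℝ) : ℝ :=
  (∑ j : Fin 2, if (winners2 b j).Nonempty then (1 : ℝ) else 0)
    - ∑ i : Fin 2, cost2 ε i (b i)

/-- the claimed equilibrium: player `i` produces output 1 along activity `3 − i` -/
def eqProf : Fin 2 → Fin 2 → ℝ := fun i j => if j = other i then 1 else 0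

/-- The price of anarchy of the equal-sharing cost contest game is unbounded: for every
`ε ∈ (0, 1/4)` the two-player, two-activity, two-contest instance has a pure Nash
equilibrium of welfare `2ε`, while the optimal welfare is `1 − 2ε`. -/
theorem cost_poa_unbounded (ε : ℝ) (hε0 : 0 < ε) (hε1 : ε < 1 / 4) :
    (∀ i : Fin 2, ∀ x : Fin 2 → ℝ, (∀ j, 0 ≤ x j) →
      util2 ε (Function.update eqProf i x) i ≤ util2 ε eqProf i) ∧
    sw2 ε eqProf = 2 * ε ∧
    (∃ b : Fin 2 → Fin 2 → ℝ, (∀ i j, 0 ≤ b i j) ∧ sw2 ε b = 1 - 2 * ε) ∧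
    (∀ b : Fin 2 → Fin 2 → ℝ, (∀ i j, 0 ≤ b i j) → sw2 ε b ≤ 1 - 2 * ε) := by
  refine ⟨?_, ?_, ?_, ?_⟩
  · -- Nash equilibrium
    intro i x hx
    fin_cases i
    · show util2 ε (Function.update eqProf 0 x) 0 ≤ util2 ε eqProf 0
      set b : Fin 2 → Fin 2 → ℝ := Function.update eqProf 0 x with hbdef
      have hb0 : b 0 = x := by simp [hbdef]
      have rhs : util2 ε eqProf 0 = ε := by
        have w0 : winners2 eqProf 0 = {1} := by
          ext k; fin_cases k <;> simp [winners2, eqProf, other]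
        have w1 : winners2 eqProf 1 = {0} := by
          ext k; fin_cases k <;> simp [winners2, eqProf, other]
        simp only [util2, Fin.sum_univ_two, w0, w1]
        norm_num [cost2, eqProf, other]
      rw [rhs]
      have w0 : winners2 b 0 = if 1 ≤ x 0 then {0,1} else {1} := by
        split <;> rename_i h <;> ext k <;> fin_cases k <;>
          simp [winners2, hbdef, eqProf, other] <;> first | exact h | linarith
      have w1 : winners2 b 1 = if 1 ≤ x 1 then {0} else (∅ : Finset (Fin 2)) := by
        split <;> rename_i h <;> ext k <;> fin_cases k <;>
          simp [winners2, hbdef, eqProf, other] <;> first | exact h | linarith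
      by_cases h0 : 1 ≤ x 0 <;> by_cases h1 : 1 ≤ x 1 <;>
        simp only [util2, Fin.sum_univ_two, w0, w1, h0, h1, if_true, if_false,
          hb0, cost2, other] <;>
        norm_num <;>
        nlinarith [hx 0, hx 1]
    · show util2 ε (Function.update eqProf 1 x) 1 ≤ util2 ε eqProf 1
      set b : Fin 2 → Fin 2 → ℝ := Function.update eqProf 1 x with hbdef
      have hb1 : b 1 = x := by simp [hbdef]
      have rhs : util2 ε eqProf 1 = ε := by
        have w0 : winners2 eqProf 0 = {1} := by
          ext k; fin_cases k <;> simp [winners2, eqProf, other]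
        have w1 : winners2 eqProf 1 = {0} := by
          ext k; fin_cases k <;> simp [winners2, eqProf, other]
        simp only [util2, Fin.sum_univ_two, w0, w1]
        norm_num [cost2, eqProf, other]
      rw [rhs]
      have w0 : winners2 b 0 = if 1 ≤ x 0 then {1} else (∅ : Finset (Fin 2)) := by
        split <;> rename_i h <;> ext k <;> fin_cases k <;>
          simp [winners2, hbdef, eqProf, other] <;> first | exact h | linarith
      have w1 : winners2 b 1 = if 1 ≤ x 1 then {0,1} else {0} := by
        split <;> rename_i h <;> ext k <;> fin_cases k <;>
          simp [winners2, hbdef, eqProf, other] <;> first | exact h | linarith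
      by_cases h0 : 1 ≤ x 0 <;> by_cases h1 : 1 ≤ x 1 <;>
        simp only [util2, Fin.sum_univ_two, w0, w1, h0, h1, if_true, if_false,
          hb1, cost2, other] <;>
        norm_num <;>
        nlinarith [hx 0, hx 1]
  · -- welfare of the equilibrium
    have w0 : winners2 eqProf 0 = {1} := by
      ext k; fin_cases k <;> simp [winners2, eqProf, other]
    have w1 : winners2 eqProf 1 = {0} := by
      ext k; fin_cases k <;> simp [winners2, eqProf, other]
    simp only [sw2, Fin.sum_univ_two, w0, w1]
    norm_num [cost2, eqProf, other]
    ring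
  · -- the efficient profile
    refine ⟨fun i j => if j = i then (1:ℝ) else 0, fun i j => by positivity, ?_⟩
    set b : Fin 2 → Fin 2 → ℝ := fun i j => if j = i then (1:ℝ) else 0 with hbdef
    have w0 : winners2 b 0 = {0} := by
      ext k; fin_cases k <;> simp [winners2, hbdef]
    have w1 : winners2 b 1 = {1} := by
      ext k; fin_cases k <;> simp [winners2, hbdef]
    simp only [sw2, Fin.sum_univ_two, w0, w1]
    norm_num [cost2, hbdef, other]
    ring
  · -- welfare upper bound
    intro b hb
    have key : ∀ j : Fin 2, (if (winners2 b j).Nonempty then (1:ℝ) else 0) ≤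
        (1/2 - ε) + (1/2 + ε) * (b 0 j + b 1 j) := by
      intro j
      split
      · rename_i h
        obtain ⟨i, hi⟩ := h
        simp only [winners2, mem_filter] at hi
        fin_cases i
        · nlinarith [hb 0 j, hb 1 j, show (1:ℝ) ≤ b 0 j from hi.2]
        · nlinarith [hb 0 j, hb 1 j, show (1:ℝ) ≤ b 1 j from hi.2]
      · nlinarith [hb 0 j, hb 1 j]
    have k0 := key 0
    have k1 := key 1
    simp only [sw2, Fin.sum_univ_two, cost2, other]
    norm_num
    nlinarith [hb 0 0, hb 0 1, hb 1 0, hb 1 1]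


end PoACost
end

section
/- Every single-activity budget contest game is equivalent (with respect to pure-strategy Nash equilibria) to a multi-activity budget contest game with convex strategy sets: specifically, for any single-activity game where each player i has per-activity output caps (b̄_{i,ℓ})_{ℓ∈K} with b̄_{i,ℓ}' < 2 for all i,ℓ, and each contest j has thresholds 1/w_{j,ℓ}' > 1 for all j,ℓ, the multi-activity game with convex strategy sets B_i = {Σ_ℓ α_ℓ · b̄_{i,ℓ}' e_ℓ : α_ℓ ≥ 0, Σ_ℓ α_ℓ ≤ 1} has the property that in any best response, a player never benefits from producing positive output along more than one activity. -/
open Finset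

/-- Single-activity to multi-activity reduction, key claim: if all per-activity caps
satisfy `b̄_{i,ℓ} < 2` and all contest thresholds satisfy `1/w_{j,ℓ} > 1` (i.e.
`w_{j,ℓ} < 1`), then any output vector in the convex strategy set
`{Σ_ℓ α_ℓ · b̄_ℓ e_ℓ : α ≥ 0, Σ α ≤ 1}` has at most one coordinate `≥ 1`, and there is a
single activity `ℓ₀` such that concentrating the full cap on `ℓ₀` wins every contest the
vector wins: splitting output across several activities never helps. -/
theorem single_to_multi_reduction
    {K M : Type*} [Fintype K] [Fintype M] [Nonempty K]
    (bbar : K → ℝ) (hbar : ∀ ℓ, 0 ≤ bbar ℓ ∧ bbar ℓ < 2)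
    (w : M → K → ℝ) (hw : ∀ j ℓ, 0 ≤ w j ℓ ∧ w j ℓ < 1)
    (α : K → ℝ) (hα : ∀ ℓ, 0 ≤ α ℓ) (hαs : ∑ ℓ : K, α ℓ ≤ 1)
    (x : K → ℝ) (hx : ∀ ℓ, x ℓ = α ℓ * bbar ℓ) :
    {ℓ : K | 1 ≤ x ℓ}.Subsingleton ∧
    ∃ ℓ₀ : K, ∀ j : M, (∃ ℓ : K, 1 ≤ w j ℓ * x ℓ) → 1 ≤ w j ℓ₀ * bbar ℓ₀ := by
  classical
  have hxle : ∀ ℓ, x ℓ ≤ bbar ℓ := by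
    intro ℓ
    rw [hx ℓ]
    calc α ℓ * bbar ℓ ≤ 1 * bbar ℓ := by
          apply mul_le_mul_of_nonneg_right _ (hbar ℓ).1
          calc α ℓ ≤ ∑ ℓ' : K, α ℓ' := Finset.single_le_sum (fun ℓ' _ => hα ℓ') (Finset.mem_univ ℓ)
            _ ≤ 1 := hαs
      _ = bbar ℓ := one_mul _
  have half : ∀ ℓ, 1 ≤ x ℓ → 1/2 < α ℓ := by
    intro ℓ h
    by_contra hc
    push_neg at hc
    rw [hx ℓ] at h
    have hαpos : 0 < α ℓ := by nlinarith [(hbar ℓ).1, hα ℓ]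
    nlinarith [mul_lt_mul_of_pos_left (hbar ℓ).2 hαpos]
  have hsub : {ℓ : K | 1 ≤ x ℓ}.Subsingleton := by
    intro a ha b hb
    by_contra hne
    have h1 := half a ha
    have h2 := half b hb
    have : α a + α b ≤ ∑ ℓ : K, α ℓ := by
      have := Finset.add_sum_erase Finset.univ α (Finset.mem_univ a)
      have hb' : b ∈ Finset.univ.erase a := Finset.mem_erase.2 ⟨fun h => hne h.symm, Finset.mem_univ b⟩
      have := Finset.single_le_sum (f := α) (fun ℓ' _ => hα ℓ') hb'
      have := Finset.add_sum_erase Finset.univ α (Finset.mem_univ a)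
      linarith [Finset.add_sum_erase Finset.univ α (Finset.mem_univ a),
        Finset.single_le_sum (f := α) (fun ℓ' (_ : ℓ' ∈ Finset.univ.erase a) => hα ℓ') hb']
    linarith
  refine ⟨hsub, ?_⟩
  by_cases hex : ∃ ℓ, 1 ≤ x ℓ
  · obtain ⟨ℓ₀, hℓ₀⟩ := hex
    refine ⟨ℓ₀, fun j ⟨ℓ, hℓ⟩ => ?_⟩
    have hwj := hw j ℓ
    have hxℓ : 1 ≤ x ℓ := by nlinarith [hxle ℓ, (hbar ℓ).1]
    have : ℓ = ℓ₀ := hsub hxℓ hℓ₀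
    subst this
    calc (1:ℝ) ≤ w j ℓ * x ℓ := hℓ
      _ ≤ w j ℓ * bbar ℓ := mul_le_mul_of_nonneg_left (hxle ℓ) hwj.1
  · refine ⟨Classical.arbitrary K, fun j ⟨ℓ, hℓ⟩ => ?_⟩
    exfalso
    apply hex
    refine ⟨ℓ, ?_⟩
    have hwj := hw j ℓ
    nlinarith [hxle ℓ, (hbar ℓ).1]
end
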